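/- Suppose K in Q[[Q]] has constant coefficient 14 and satisfies: for every y in Q[[q]][t] with L1~ y = 0, D_Q~ ( D_Q~ ( K^{-1} * D_Q~ ( D_Q~ ( T(y) ) ) ) ) = 0. Let y_0, y_1, y_2, y_3 be the normalized solutions of L1~, i.e. for each k in {0,1,2,3}, y_k is the unique element sum_{i=0}^{k} t^i * y_{k,i} of Q[[q]][t] with L1~ y_k = 0, y_{k,k} = f, and constant coefficient of y_{k,i} equal to 0 for i < k. Then T(y_0) = 1, T(y_1) = s, and T(y_0), T(y_1), T(y_2), T(y_3) form a Q-basis of the space {z in Q[[Q]][s] : D_Q~(D_Q~(K^{-1} * D_Q~(D_Q~ z))) = 0}. (This is the 'basis of solutions' assertion of Theorem 1.) -/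

import Mathlib

open PowerSeries

/-- The operator `D = q * d/dq` on `ℚ[[q]]`. -/
noncomputable def Dop (f : ℚ⟦X⟧) : ℚ⟦X⟧ := X * derivative ℚ f

/-- Coefficient of `D^4` in the Picard-Fuchs operator. -/
noncomputable def A4 : ℚ⟦X⟧ := (1 - 289 * X - 57 * X ^ 2 + X ^ 3) * (1 - 3 * X) ^ 2
/-- Coefficient of `D^3` in the Picard-Fuchs operator. -/
noncomputable def A3 : ℚ⟦X⟧ := 4 * X * (3 * X - 1) * (143 + 57 * X - 87 * X ^ 2 + 3 * X ^ 3)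
/-- Coefficient of `D^2` in the Picard-Fuchs operator. -/
noncomputable def A2 : ℚ⟦X⟧ :=
  2 * X * (-212 - 473 * X + 725 * X ^ 2 - 435 * X ^ 3 + 27 * X ^ 4)
/-- Coefficient of `D^1` in the Picard-Fuchs operator. -/
noncomputable def A1 : ℚ⟦X⟧ :=
  2 * X * (-69 - 481 * X + 159 * X ^ 2 - 171 * X ^ 3 + 18 * X ^ 4)
/-- Coefficient of `D^0` in the Picard-Fuchs operator. -/
noncomputable def A0 : ℚ⟦X⟧ := X * (-17 - 202 * X - 8 * X ^ 2 - 54 * X ^ 3 + 9 * X ^ 4)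

/-- The Picard-Fuchs operator of Rødland's mirror family of the Pfaffian
Calabi-Yau 3-fold, acting on `ℚ[[q]]` (here `q` is `PowerSeries.X`). -/
noncomputable def L1 (f : ℚ⟦X⟧) : ℚ⟦X⟧ :=
  A4 * Dop^[4] f + A3 * Dop^[3] f + A2 * Dop^[2] f + A1 * Dop f + A0 * f

/-- The extension of `D` to the derivation on `ℚ[[q]][t]` with `D t = 1`
(where `t` plays the role of `ln q`). -/
noncomputable def Dt (y : Polynomial ℚ⟦X⟧) : Polynomial ℚ⟦X⟧ :=
  Polynomial.derivative y + y.sum fun n a => Polynomial.C (Dop a) * Polynomial.X ^ n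

/-- The Picard-Fuchs operator acting on `ℚ[[q]][t]`, with `D` replaced by its
extension `Dt`. -/
noncomputable def L1t (y : Polynomial ℚ⟦X⟧) : Polynomial ℚ⟦X⟧ :=
    Polynomial.C A4 * Dt^[4] y + Polynomial.C A3 * Dt^[3] y
  + Polynomial.C A2 * Dt^[2] y + Polynomial.C A1 * Dt y + Polynomial.C A0 * y

/-- Composition `f ∘ g` of formal power series (intended for `g` with zero constant
coefficient, so that the sum below is the genuine substitution of `g` into `f`):
the `k`-th coefficient is `Σ_{n ≤ k} (coeff n f) * coeff k (g^n)`. -/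
noncomputable def psComp (f g : ℚ⟦X⟧) : ℚ⟦X⟧ :=
  PowerSeries.mk fun k => ∑ n ∈ Finset.range (k + 1), coeff n f * coeff k (g ^ n)

/-- The mirror map `μ = q · exp(h)` with `h = g f⁻¹`, where `f = I₀` and
`t f + g = I₁` are the holomorphic and logarithmic solutions. -/
noncomputable def mirrorMap (f g : ℚ⟦X⟧) : ℚ⟦X⟧ := X * psComp (exp ℚ) (g * f⁻¹)

/-- The mirror transform: for `y = Σᵢ tⁱ yᵢ ∈ ℚ[[q]][t]` and `ν` the compositional
inverse of the mirror map, `T(y) = Σᵢ (s - h(ν))ⁱ · ((yᵢ f⁻¹)(ν)) ∈ ℚ[[Q]][s]`,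
where `h = g f⁻¹`. -/
noncomputable def mirrorT (f g nu : ℚ⟦X⟧) (y : Polynomial ℚ⟦X⟧) : Polynomial ℚ⟦X⟧ :=
  y.sum fun i a =>
    (Polynomial.X - Polynomial.C (psComp (g * f⁻¹) nu)) ^ i *
      Polynomial.C (psComp (a * f⁻¹) nu)

/-! The transform `T` sends a polynomial `y` whose top `t`-coefficient is `f` to a polynomial in `s`
that is monic of the same degree, so `T(y₀), …, T(y₃)` are monic of degrees `0, 1, 2, 3`: this
gives `T(y₀) = 1` and linear independence. A power series solution of `L1` is determined by its
constant term, hence `y₁ = t f + g` and `T(y₁) = s`.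
Finally the solution space of `D² K⁻¹ D²` has dimension at most `4`: a polynomial in `s` killed
by `D` is a rational constant, so the kernel of `D²` is spanned by `s` and `1`, and multiplication
by `K⁻¹` is injective. The four transforms solve the equation by hypothesis, so they span it. -/

theorem rank_span_pair_le {K V : Type*} [Ring K] [StrongRankCondition K] [AddCommGroup V]
    [Module K V] (x y : V) : Module.rank K (Submodule.span K {x, y}) ≤ 2 := by
  classical
  have h := rank_span_finset_le (R := K) ({x, y} : Finset V)
  rw [Finset.coe_pair] at h
  exact h.trans (by exact_mod_cast Finset.card_le_two)

theorem Submodule.span_eq_of_linearIndependent_of_rank_le {K V ι : Type*} [DivisionRing K]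
    [AddCommGroup V] [Module K V] [Fintype ι] {v : ι → V} (hv : LinearIndependent K v)
    {W : Submodule K V} (hvW : ∀ i, v i ∈ W) (hW : Module.rank K W ≤ Fintype.card ι) :
    Submodule.span K (Set.range v) = W := by
  have : FiniteDimensional K W :=
    Module.rank_lt_aleph0_iff.mp (hW.trans_lt Cardinal.natCast_lt_aleph0)
  refine Submodule.eq_of_le_of_finrank_le
    (Submodule.span_le.mpr (Set.range_subset_iff.mpr hvW)) ?_
  rw [finrank_span_eq_card hv]
  exact Module.finrank_le_of_rank_le hW

theorem Polynomial.linearIndependent_of_degree_eq {K R : Type*} [Field K] [Ring R]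
    [Algebra K R] :
    ∀ {n : ℕ} {p : Fin n → Polynomial R}, (∀ k, (p k).degree = k) → LinearIndependent K p
  | 0, _, _ => linearIndependent_empty_type
  | n + 1, p, hp => by
    rw [← Fin.snoc_init_self p, linearIndependent_finSnoc]
    refine ⟨linearIndependent_of_degree_eq fun k => by simpa [Fin.init] using hp k.castSucc,
      fun hmem => ?_⟩
    have hspan : Submodule.span K (Set.range (Fin.init p)) ≤ (degreeLT R n).restrictScalars K :=
      Submodule.span_le.mpr <| Set.range_subset_iff.mpr fun k =>
        mem_degreeLT.mpr (by rw [Fin.init, hp, Fin.val_castSucc]; exact Nat.cast_lt.mpr k.isLt)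
    have hlt := mem_degreeLT.mp (hspan hmem)
    rw [hp, Fin.val_last] at hlt
    exact lt_irrefl _ hlt

theorem PowerSeries.coeff_mul_eq_constantCoeff_mul {R : Type*} [Semiring R] {φ ψ : R⟦X⟧}
    {n : ℕ} (hψ : ∀ k < n, coeff k ψ = 0) : coeff n (φ * ψ) = constantCoeff φ * coeff n ψ := by
  rw [coeff_mul, Finset.sum_eq_single (0, n)]
  · rw [coeff_zero_eq_constantCoeff_apply]
  · rintro ⟨i, k⟩ hik hne
    rw [Finset.HasAntidiagonal.mem_antidiagonal] at hik
    rw [hψ k (by grind), mul_zero]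
  · simp

theorem coeff_Dop (a : ℚ⟦X⟧) (n : ℕ) : coeff n (Dop a) = n * coeff n a := by
  cases n with
  | zero => simp [Dop]
  | succ m => rw [Dop, coeff_succ_X_mul, coeff_derivative]; push_cast; ring

theorem coeff_iterate_Dop (j : ℕ) (a : ℚ⟦X⟧) (n : ℕ) :
    coeff n (Dop^[j] a) = (n : ℚ) ^ j * coeff n a := by
  induction j with
  | zero => simp
  | succ j ih => rw [Function.iterate_succ_apply', coeff_Dop, ih]; ring

theorem constantCoeff_Dop (a : ℚ⟦X⟧) : constantCoeff (Dop a) = 0 := by simp [Dop]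

theorem Dop_smul (r : ℚ) (a : ℚ⟦X⟧) : Dop (r • a) = r • Dop a := by
  rw [Dop, Dop, Derivation.map_smul, mul_smul_comm]

theorem eq_C_of_Dop_eq_zero {a : ℚ⟦X⟧} (h : Dop a = 0) : a = C (constantCoeff a) := by
  ext (_ | n)
  · simp
  · have hn := congrArg (coeff (n + 1)) h
    rw [coeff_Dop, map_zero, mul_eq_zero] at hn
    simpa [coeff_C] using hn.resolve_left (by positivity)

-- Only `A4` has a nonzero constant term, so the indicial polynomial of `L1` at `q = 0` is `n ^ 4`.
theorem coeff_L1_of_forall_lt {w : ℚ⟦X⟧} {n : ℕ} (hw : ∀ k < n, coeff k w = 0) :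
    coeff n (L1 w) = (n : ℚ) ^ 4 * coeff n w := by
  have hDw (j : ℕ) : ∀ k < n, coeff k (Dop^[j] w) = 0 := fun k hk => by
    rw [coeff_iterate_Dop, hw k hk, mul_zero]
  have hterm (A : ℚ⟦X⟧) (j : ℕ) :
      coeff n (A * Dop^[j] w) = constantCoeff A * (n : ℚ) ^ j * coeff n w := by
    rw [coeff_mul_eq_constantCoeff_mul (hDw j), coeff_iterate_Dop, mul_assoc]
  have h1 := hterm A1 1
  have h0 := hterm A0 0
  simp only [Function.iterate_one, Function.iterate_zero, id] at h1 h0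
  rw [L1, map_add, map_add, map_add, map_add, hterm, hterm, hterm, h1, h0]
  simp [A4, A3, A2, A1, A0]

theorem eq_zero_of_L1_eq_zero {w : ℚ⟦X⟧} (hw : L1 w = 0) (hw₀ : constantCoeff w = 0) :
    w = 0 := by
  ext n
  induction n using Nat.strong_induction_on with
  | _ n ih =>
    rcases n with _ | n
    · simpa using hw₀
    · have h := coeff_L1_of_forall_lt (fun k hk => by simpa using ih k hk)
      rw [hw, map_zero, eq_comm, mul_eq_zero] at h
      simpa using h.resolve_left (by positivity)

theorem coeff_Dt (y : Polynomial ℚ⟦X⟧) (i : ℕ) :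
    (Dt y).coeff i = y.coeff (i + 1) * (i + 1) + Dop (y.coeff i) := by
  rw [Dt, Polynomial.coeff_add, Polynomial.coeff_derivative, Polynomial.sum,
    Polynomial.finsetSum_coeff]
  simp only [Polynomial.coeff_C_mul_X_pow]
  rw [Finset.sum_ite_eq]
  split_ifs with h
  · rfl
  · rw [Polynomial.notMem_support_iff.mp h]
    simp [Dop]

noncomputable def DtLinear : Module.End ℚ (Polynomial ℚ⟦X⟧) where
  toFun := Dt
  map_add' y z := by
    ext1 i
    simp only [coeff_Dt, Polynomial.coeff_add, Dop, map_add]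
    ring
  map_smul' r y := by
    ext1 i
    simp only [coeff_Dt, Polynomial.coeff_smul, Dop_smul, RingHom.id_apply, smul_add,
      smul_mul_assoc]

@[simp]
theorem DtLinear_apply (y : Polynomial ℚ⟦X⟧) : DtLinear y = Dt y := rfl

theorem iterate_Dt (k : ℕ) : Dt^[k] = ⇑(DtLinear ^ k) := (Module.End.coe_pow DtLinear k).symm

theorem Dt_C (a : ℚ⟦X⟧) : Dt (Polynomial.C a) = Polynomial.C (Dop a) := by
  ext1 (_ | i) <;> simp [coeff_Dt, Polynomial.coeff_C, Dop]

theorem Dt_X : Dt (Polynomial.X : Polynomial ℚ⟦X⟧) = 1 := by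
  ext1 (_ | _ | i) <;> simp [coeff_Dt, Polynomial.coeff_X, Polynomial.coeff_one, Dop]

theorem L1t_C (a : ℚ⟦X⟧) : L1t (Polynomial.C a) = Polynomial.C (L1 a) := by
  have h (k : ℕ) : Dt^[k] (Polynomial.C a) = Polynomial.C (Dop^[k] a) := by
    induction k with
    | zero => rfl
    | succ k ih => rw [Function.iterate_succ_apply', ih, Dt_C, Function.iterate_succ_apply']
  have h1 := h 1
  simp only [Function.iterate_one] at h1
  simp only [L1t, L1, h, h1, Polynomial.C_mul, Polynomial.C_add]

theorem L1t_sub (y z : Polynomial ℚ⟦X⟧) : L1t (y - z) = L1t y - L1t z := by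
  have h (k : ℕ) : Dt^[k] (y - z) = Dt^[k] y - Dt^[k] z := by
    rw [iterate_Dt]; exact map_sub _ _ _
  have h1 : Dt (y - z) = Dt y - Dt z := map_sub DtLinear y z
  simp only [L1t, h, h1]
  ring

theorem coeff_zero_eq_of_L1t_eq_zero {f g : ℚ⟦X⟧} (hg₀ : constantCoeff g = 0)
    (hg : L1t (Polynomial.X * Polynomial.C f + Polynomial.C g) = 0) {y : Polynomial ℚ⟦X⟧}
    (hy : L1t y = 0) (hdeg : y.natDegree ≤ 1) (h₁ : y.coeff 1 = f)
    (h₀ : constantCoeff (y.coeff 0) = 0) : y.coeff 0 = g := by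
  have hsplit : y - (Polynomial.X * Polynomial.C f + Polynomial.C g) =
      Polynomial.C (y.coeff 0 - g) := by
    conv_lhs => rw [Polynomial.eq_X_add_C_of_natDegree_le_one hdeg, h₁]
    rw [Polynomial.C_sub]; ring
  have hL : L1 (y.coeff 0 - g) = 0 := by
    rw [← Polynomial.C_inj, ← L1t_C, ← hsplit, L1t_sub, hy, hg, sub_zero, map_zero]
  exact sub_eq_zero.mp (eq_zero_of_L1_eq_zero hL (by rw [map_sub, hg₀, h₀, sub_zero]))

theorem ker_DtLinear : LinearMap.ker DtLinear = Submodule.span ℚ {1} := by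
  refine le_antisymm (fun y hy => ?_) ?_
  · have hDy (i : ℕ) : y.coeff (i + 1) * (i + 1) + Dop (y.coeff i) = 0 := by
      rw [← coeff_Dt, ← DtLinear_apply, LinearMap.mem_ker.mp hy, Polynomial.coeff_zero]
    have hconst (i : ℕ) : constantCoeff (y.coeff (i + 1)) = 0 := by
      simpa [constantCoeff_Dop, Nat.cast_add_one_ne_zero] using congrArg constantCoeff (hDy i)
    have htop : y.leadingCoeff = C (constantCoeff y.leadingCoeff) :=
      eq_C_of_Dop_eq_zero (by simpa using hDy y.natDegree)
    have hdeg : y.natDegree = 0 := by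
      by_contra hd
      obtain ⟨k, hk⟩ := Nat.exists_eq_add_one_of_ne_zero hd
      have hlc : y.leadingCoeff = 0 := by
        rw [htop, Polynomial.leadingCoeff, hk, hconst, map_zero]
      simp [Polynomial.leadingCoeff_eq_zero.mp hlc] at hd
    have hlc : y.leadingCoeff = y.coeff 0 := by rw [Polynomial.leadingCoeff, hdeg]
    refine Submodule.mem_span_singleton.mpr ⟨constantCoeff (y.coeff 0), ?_⟩
    rw [Algebra.smul_def, mul_one, Polynomial.algebraMap_apply, ← hlc]
    conv_rhs => rw [Polynomial.eq_C_of_natDegree_eq_zero hdeg, ← hlc, htop]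
    rfl
  · rw [Submodule.span_le, Set.singleton_subset_iff, SetLike.mem_coe, LinearMap.mem_ker,
      DtLinear_apply, ← Polynomial.C_1, Dt_C]
    simp [Dop]

theorem ker_DtLinear_comp_DtLinear_le :
    LinearMap.ker (DtLinear ∘ₗ DtLinear) ≤ Submodule.span ℚ {Polynomial.X, 1} := by
  intro y hy
  have hDy : Dt y ∈ Submodule.span ℚ {1} := by
    rw [← ker_DtLinear]; simpa using hy
  obtain ⟨a, ha⟩ := Submodule.mem_span_singleton.mp hDy
  have hrest : y - a • Polynomial.X ∈ Submodule.span ℚ {1} := by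
    rw [← ker_DtLinear, LinearMap.mem_ker, map_sub, map_smul, DtLinear_apply, DtLinear_apply,
      Dt_X, ha, sub_self]
  obtain ⟨b, hb⟩ := Submodule.mem_span_singleton.mp hrest
  exact Submodule.mem_span_pair.mpr ⟨a, b, by rw [hb]; abel⟩

noncomputable def quantumSolutions (K : ℚ⟦X⟧) : Submodule ℚ (Polynomial ℚ⟦X⟧) :=
  LinearMap.ker
    ((DtLinear ∘ₗ DtLinear) ∘ₗ LinearMap.mulLeft ℚ (Polynomial.C K⁻¹) ∘ₗ (DtLinear ∘ₗ DtLinear))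

theorem coe_quantumSolutions (K : ℚ⟦X⟧) :
    (quantumSolutions K : Set (Polynomial ℚ⟦X⟧)) =
      {z | Dt (Dt (Polynomial.C K⁻¹ * Dt (Dt z))) = 0} := rfl

theorem rank_quantumSolutions_le {K : ℚ⟦X⟧} (hK : constantCoeff K ≠ 0) :
    Module.rank ℚ (quantumSolutions K) ≤ 4 := by
  have hinv : (Polynomial.C K⁻¹ : Polynomial ℚ⟦X⟧) ≠ 0 := by
    rw [Ne, Polynomial.C_eq_zero]
    exact fun h => hK (by simpa using congrArg constantCoeff h)
  have hker : LinearMap.ker (LinearMap.mulLeft ℚ (Polynomial.C K⁻¹) ∘ₗ (DtLinear ∘ₗ DtLinear)) =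
      LinearMap.ker (DtLinear ∘ₗ DtLinear) :=
    LinearMap.ker_comp_of_ker_eq_bot _ (LinearMap.ker_eq_bot.mpr (mul_right_injective₀ hinv))
  have hD2 : Module.rank ℚ (LinearMap.ker (DtLinear ∘ₗ DtLinear)) ≤ 2 :=
    (Submodule.rank_mono ker_DtLinear_comp_DtLinear_le).trans (rank_span_pair_le _ _)
  have h := LinearMap.lift_rank_comap_le
    (f := LinearMap.mulLeft ℚ (Polynomial.C K⁻¹) ∘ₗ (DtLinear ∘ₗ DtLinear))
    (LinearMap.ker (DtLinear ∘ₗ DtLinear))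
  simp only [Cardinal.lift_id] at h
  rw [hker, ← LinearMap.ker_comp] at h
  calc Module.rank ℚ (quantumSolutions K) ≤ 2 + 2 := h.trans (add_le_add hD2 hD2)
    _ = 4 := by norm_num

theorem psComp_zero_left (nu : ℚ⟦X⟧) : psComp 0 nu = 0 := by
  ext k; simp [psComp]

theorem psComp_one_left (nu : ℚ⟦X⟧) : psComp 1 nu = 1 := by
  ext k
  rw [psComp, coeff_mk, Finset.sum_eq_single 0 (fun n _ hn => by simp [coeff_one, hn]) (by simp)]
  simp

section mirrorT

variable {f g nu : ℚ⟦X⟧}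

theorem mirrorT_eq_sum (p : Polynomial ℚ⟦X⟧) {N : ℕ} (hN : p.natDegree < N) :
    mirrorT f g nu p = ∑ i ∈ Finset.range N,
      (Polynomial.X - Polynomial.C (psComp (g * f⁻¹) nu)) ^ i *
        Polynomial.C (psComp (p.coeff i * f⁻¹) nu) :=
  Polynomial.sum_over_range' p (fun n => by simp [psComp_zero_left]) N hN

theorem exists_mirrorT_eq_add_pow (hf : constantCoeff f ≠ 0) {p : Polynomial ℚ⟦X⟧}
    (hp : p.leadingCoeff = f) :
    ∃ r : Polynomial ℚ⟦X⟧, r.degree < p.natDegree ∧ mirrorT f g nu p =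
      r + (Polynomial.X - Polynomial.C (psComp (g * f⁻¹) nu)) ^ p.natDegree := by
  have hlast : psComp (p.coeff p.natDegree * f⁻¹) nu = 1 := by
    rw [← Polynomial.leadingCoeff, hp, PowerSeries.mul_inv_cancel f hf, psComp_one_left]
  refine ⟨_, ?_, by rw [mirrorT_eq_sum p p.natDegree.lt_add_one, Finset.sum_range_succ, hlast,
    Polynomial.C_1, mul_one]⟩
  rw [← Polynomial.mem_degreeLT]
  refine Submodule.sum_mem _ fun i hi => Polynomial.mem_degreeLT.mpr ?_
  have hdeg : ((Polynomial.X - Polynomial.C (psComp (g * f⁻¹) nu)) ^ i *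
      Polynomial.C (psComp (p.coeff i * f⁻¹) nu)).degree ≤ (i : WithBot ℕ) := by
    compute_degree
    exact le_rfl
  exact hdeg.trans_lt (Nat.cast_lt.mpr (Finset.mem_range.mp hi))

theorem monic_mirrorT (hf : constantCoeff f ≠ 0) {p : Polynomial ℚ⟦X⟧}
    (hp : p.leadingCoeff = f) : (mirrorT f g nu p).Monic := by
  obtain ⟨r, hr, h⟩ := exists_mirrorT_eq_add_pow (g := g) (nu := nu) hf hp
  rw [h]
  exact ((Polynomial.monic_X_sub_C _).pow _).add_of_right (by simpa using hr)

theorem natDegree_mirrorT (hf : constantCoeff f ≠ 0) {p : Polynomial ℚ⟦X⟧}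
    (hp : p.leadingCoeff = f) : (mirrorT f g nu p).natDegree = p.natDegree := by
  obtain ⟨r, hr, h⟩ := exists_mirrorT_eq_add_pow (g := g) (nu := nu) hf hp
  rw [h, Polynomial.natDegree_add_eq_right_of_degree_lt (by simpa using hr)]
  simp

theorem mirrorT_eq_X (hf : constantCoeff f ≠ 0) {p : Polynomial ℚ⟦X⟧} (hp : p.natDegree ≤ 1)
    (h₁ : p.coeff 1 = f) (h₀ : p.coeff 0 = g) : mirrorT f g nu p = Polynomial.X := by
  rw [mirrorT_eq_sum p (Nat.lt_succ_of_le hp), Finset.sum_range_succ, Finset.sum_range_one, h₁,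
    h₀, PowerSeries.mul_inv_cancel f hf, psComp_one_left]
  simp

end mirrorT

theorem pfaffian_mirror_basis_of_solutions_general (f g nu K : ℚ⟦X⟧)
    (hf₀ : constantCoeff f = 1)
    (hg₀ : constantCoeff g = 0)
    (hg : L1t (Polynomial.X * Polynomial.C f + Polynomial.C g) = 0)
    (hK₀ : constantCoeff K = 14)
    (hK : ∀ y : Polynomial ℚ⟦X⟧, L1t y = 0 →
      Dt (Dt (Polynomial.C K⁻¹ * Dt (Dt (mirrorT f g nu y)))) = 0)
    (Y : Fin 4 → Polynomial ℚ⟦X⟧)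
    (hY : ∀ k : Fin 4, L1t (Y k) = 0 ∧ (Y k).degree ≤ (k : ℕ) ∧
      (Y k).coeff k = f ∧ ∀ i < (k : ℕ), constantCoeff ((Y k).coeff i) = 0) :
    mirrorT f g nu (Y 0) = 1 ∧ mirrorT f g nu (Y 1) = Polynomial.X ∧
      ∃ V : Submodule ℚ (Polynomial ℚ⟦X⟧),
        (V : Set (Polynomial ℚ⟦X⟧)) =
            {z | Dt (Dt (Polynomial.C K⁻¹ * Dt (Dt z))) = 0} ∧
          LinearIndependent ℚ (fun k : Fin 4 => mirrorT f g nu (Y k)) ∧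
          Submodule.span ℚ (Set.range fun k : Fin 4 => mirrorT f g nu (Y k)) = V := by
  have hf : constantCoeff f ≠ 0 := by simp [hf₀]
  have hY_deg (k : Fin 4) : (Y k).natDegree = k :=
    Polynomial.natDegree_eq_of_le_of_coeff_ne_zero (Polynomial.natDegree_le_of_degree_le (hY k).2.1)
      (by rw [(hY k).2.2.1]; exact fun h => hf (by simp [h]))
  have hY_lc (k : Fin 4) : (Y k).leadingCoeff = f := by
    rw [Polynomial.leadingCoeff, hY_deg, (hY k).2.2.1]
  have hind : LinearIndependent ℚ (fun k : Fin 4 => mirrorT f g nu (Y k)) :=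
    Polynomial.linearIndependent_of_degree_eq fun k => by
      rw [Polynomial.degree_eq_natDegree (monic_mirrorT hf (hY_lc k)).ne_zero,
        natDegree_mirrorT hf (hY_lc k), hY_deg]
      rfl
  have hT₀ : mirrorT f g nu (Y 0) = 1 :=
    Polynomial.eq_one_of_monic_natDegree_zero (monic_mirrorT hf (hY_lc 0))
      (by rw [natDegree_mirrorT hf (hY_lc 0), hY_deg]; rfl)
  have hY₁ : (Y 1).coeff 0 = g :=
    coeff_zero_eq_of_L1t_eq_zero hg₀ hg (hY 1).1 (hY_deg 1).le (hY 1).2.2.1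
      ((hY 1).2.2.2 0 one_pos)
  have hsol (k : Fin 4) : mirrorT f g nu (Y k) ∈ quantumSolutions K := by
    rw [← SetLike.mem_coe, coe_quantumSolutions]
    exact hK _ (hY k).1
  refine ⟨hT₀, mirrorT_eq_X hf (hY_deg 1).le (hY 1).2.2.1 hY₁, quantumSolutions K,
    coe_quantumSolutions K, hind, Submodule.span_eq_of_linearIndependent_of_rank_le hind hsol ?_⟩
  simpa using rank_quantumSolutions_le (by simp [hK₀])

/-- The 'basis of solutions' assertion of Theorem 1: the mirror transforms
`T(y₀), T(y₁), T(y₂), T(y₃)` of the normalized solutions of the Picard-Fuchs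
equation satisfy `T(y₀) = 1`, `T(y₁) = s`, and form a `ℚ`-basis of the solution
space of the quantum differential operator `D² (1/K) D²`. -/
theorem pfaffian_mirror_basis_of_solutions (f g nu K : ℚ⟦X⟧)
    (hf₀ : constantCoeff f = 1) (hf : L1 f = 0)
    (hg₀ : constantCoeff g = 0)
    (hg : L1t (Polynomial.X * Polynomial.C f + Polynomial.C g) = 0)
    (hnu₀ : constantCoeff nu = 0)
    (hnu : psComp nu (mirrorMap f g) = X)
    (hK₀ : constantCoeff K = 14)
    (hK : ∀ y : Polynomial ℚ⟦X⟧, L1t y = 0 →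
      Dt (Dt (Polynomial.C K⁻¹ * Dt (Dt (mirrorT f g nu y)))) = 0)
    (Y : Fin 4 → Polynomial ℚ⟦X⟧)
    (hY : ∀ k : Fin 4, L1t (Y k) = 0 ∧ (Y k).degree ≤ (k : ℕ) ∧
      (Y k).coeff k = f ∧ ∀ i < (k : ℕ), constantCoeff ((Y k).coeff i) = 0) :
    mirrorT f g nu (Y 0) = 1 ∧ mirrorT f g nu (Y 1) = Polynomial.X ∧
      ∃ V : Submodule ℚ (Polynomial ℚ⟦X⟧),
        (V : Set (Polynomial ℚ⟦X⟧)) =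
            {z | Dt (Dt (Polynomial.C K⁻¹ * Dt (Dt z))) = 0} ∧
          LinearIndependent ℚ (fun k : Fin 4 => mirrorT f g nu (Y k)) ∧
          Submodule.span ℚ (Set.range fun k : Fin 4 => mirrorT f g nu (Y k)) = V :=
  pfaffian_mirror_basis_of_solutions_general f g nu K hf₀ hg₀ hg hK₀ hK Y hY
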